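/- arXiv:2106.09110 — 2 statements merged into one kernel-verified Lean document; each statement's English description precedes it below -/
import Mathlib

section
/- If R̃ < 0 and the intervention rule G induces a partial intervention set I, then every optimal policy π̃* of the absorbing MDP M̃ (i.e., every policy attaining max_π Ṽ^π(d_0)) satisfies P_G(π̃*) = 0. -/
open scoped BigOperators Classical

noncomputable section

namespace SafeRL

variable {S A : Type*} [Fintype S] [Fintype A] [Nonempty A]

/-- `d` is a probability distribution on the finite type `S`. -/
def IsDist (d : S → ℝ) : Prop := (∀ s, 0 ≤ d s) ∧ ∑ s, d s = 1

/-- `P` is a transition kernel. -/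
def IsKernel (P : S → A → S → ℝ) : Prop := ∀ s a, IsDist (P s a)

/-- `π` is a (Markov stationary stochastic) policy. -/
def IsPolicy (π : S → A → ℝ) : Prop := ∀ s, (∀ a, 0 ≤ π s a) ∧ ∑ a, π s a = 1

/-- Point mass at `s`. -/
def pureDist (s : S) : S → ℝ := fun s' => if s' = s then 1 else 0

/-- One-step state-distribution update under policy `π`. -/
def step (P : S → A → S → ℝ) (π : S → A → ℝ) (d : S → ℝ) : S → ℝ :=
  fun s' => ∑ s, ∑ a, d s * π s a * P s a s'

/-- State distribution at time `t` when running `π` from `d0`. -/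
def distAt (P : S → A → S → ℝ) (π : S → A → ℝ) (d0 : S → ℝ) (t : ℕ) : S → ℝ :=
  (step P π)^[t] d0

/-- Expected discounted return `V^π(d0)` of policy `π` from initial distribution `d0`. -/
def value (P : S → A → S → ℝ) (π : S → A → ℝ) (r : S → A → ℝ) (γ : ℝ) (d0 : S → ℝ) : ℝ :=
  ∑' t : ℕ, γ ^ t * ∑ s, ∑ a, distAt P π d0 t s * π s a * r s a

/-- State value function `V^π(s)`. -/
def vf (P : S → A → S → ℝ) (π : S → A → ℝ) (r : S → A → ℝ) (γ : ℝ) (s : S) : ℝ :=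
  value P π r γ (pureDist s)

/-- State-action value function `Q^π(s,a)`. -/
def qf (P : S → A → S → ℝ) (π : S → A → ℝ) (r : S → A → ℝ) (γ : ℝ) (s : S) (a : A) : ℝ :=
  r s a + γ * ∑ s', P s a s' * vf P π r γ s'

/-- The cost function `c(s,a) = 1{s = s_▷}` of the cost-based MDP. -/
def cost (sbad : S) : S → A → ℝ := fun s _ => if s = sbad then 1 else 0

/-- Discounted state distribution `d^π(s)`. -/
def dsd (P : S → A → S → ℝ) (π : S → A → ℝ) (γ : ℝ) (d0 : S → ℝ) (s : S) : ℝ :=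
  (1 - γ) * ∑' t : ℕ, γ ^ t * distAt P π d0 t s

/-- Discounted state-action distribution `d^π(s,a)`. -/
def dsa (P : S → A → S → ℝ) (π : S → A → ℝ) (γ : ℝ) (d0 : S → ℝ) (s : S) (a : A) : ℝ :=
  (1 - γ) * ∑' t : ℕ, γ ^ t * distAt P π d0 t s * π s a

/-- Probability of the `h`-step trajectory prefix `f` when running `π` from `d`. -/
def prefProb (P : S → A → S → ℝ) (π : S → A → ℝ) :
    (S → ℝ) → (h : ℕ) → (Fin h → S × A) → ℝ
  | _, 0, _ => 1
  | d, h + 1, f =>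
      d (f 0).1 * π (f 0).1 (f 0).2 *
        prefProb P π (P (f 0).1 (f 0).2) h (fun i => f i.succ)

/-- Probability that the `h`-step trajectory prefix generated by `π` from `d0` satisfies `E`. -/
def eventProb (P : S → A → S → ℝ) (π : S → A → ℝ) (d0 : S → ℝ) (h : ℕ)
    (E : (Fin h → S × A) → Prop) : ℝ :=
  ∑ f : Fin h → S × A, if E f then prefProb P π d0 h f else 0

/-- `Q̄(s,μ) = E_{a ∼ μ(·|s)} Q̄(s,a)`. -/
def Qpol (Qb : S → A → ℝ) (μ : S → A → ℝ) (s : S) : ℝ := ∑ a, μ s a * Qb s a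

/-- Advantage-like function `Ā(s,a) = Q̄(s,a) − Q̄(s,μ)`. -/
def Abar (Qb : S → A → ℝ) (μ : S → A → ℝ) (s : S) (a : A) : ℝ := Qb s a - Qpol Qb μ s

/-- The intervention set `I = {(s,a) ∈ S_safe × A : Ā(s,a) > η}`. -/
def intSet (Qb : S → A → ℝ) (μ : S → A → ℝ) (η : ℝ) (sbad sabs : S) : Set (S × A) :=
  {p | p.1 ≠ sbad ∧ p.1 ≠ sabs ∧ η < Abar Qb μ p.1 p.2}

/-- The shielded policy `π' = G(π)`. -/
def shield (π μ : S → A → ℝ) (I : Set (S × A)) (sbad sabs : S) : S → A → ℝ :=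
  fun s a =>
    if s = sbad ∨ s = sabs then π s a
    else (if (s, a) ∈ I then 0 else π s a)
      + μ s a * (1 - ∑ a', if (s, a') ∈ I then π s a' else 0)

/-- `σ`-admissibility of the intervention rule `(Q̄, μ, η)` (the condition does not
involve `η`): on safe states, `Q̄ ∈ [0,γ]` and
`c(s,a) + γ E_{s'∼P(·|s,a)}[Q̄(s',μ)] ≤ Q̄(s,a) + σ`. -/
def SigmaAdmissible (P : S → A → S → ℝ) (Qb : S → A → ℝ) (μ : S → A → ℝ)
    (γ σ : ℝ) (sbad sabs : S) : Prop :=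
  ∀ s, s ≠ sbad → s ≠ sabs → ∀ a : A,
    (0 ≤ Qb s a ∧ Qb s a ≤ γ) ∧
    cost sbad s a + γ * ∑ s', P s a s' * Qpol Qb μ s' ≤ Qb s a + σ

/-- Transition kernel of the absorbing MDP `M̃`; `none` plays the role of `s_†`. -/
def Ptil (P : S → A → S → ℝ) (I : Set (S × A)) : Option S → A → Option S → ℝ :=
  fun s? a s'? =>
    match s? with
    | none => if s'? = none then 1 else 0
    | some s =>
        if (s, a) ∈ I then (if s'? = none then 1 else 0)
        else
          match s'? with
          | none => 0
          | some s' => P s a s'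

/-- Reward of the absorbing MDP `M̃` with penalty `Rt` on the intervention set. -/
def rtil (r : S → A → ℝ) (I : Set (S × A)) (Rt : ℝ) : Option S → A → ℝ :=
  fun s? a =>
    match s? with
    | none => 0
    | some s => if (s, a) ∈ I then Rt else r s a

/-- Extension of a policy on `S` to `S ∪ {s_†}`, uniform at `s_†`. -/
def extPol (π : S → A → ℝ) : Option S → A → ℝ :=
  fun s? a =>
    match s? with
    | none => (Fintype.card A : ℝ)⁻¹
    | some s => π s a

/-- Extension of an initial distribution on `S` to `S ∪ {s_†}`. -/
def extDist (d0 : S → ℝ) : Option S → ℝ :=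
  fun s? => match s? with | none => 0 | some s => d0 s

/-- `P_G(π)`: discounted probability that a trajectory of `π` in `M` visits `I`. -/
def PG (P : S → A → S → ℝ) (π : S → A → ℝ) (d0 : S → ℝ) (γ : ℝ)
    (I : Set (S × A)) : ℝ :=
  (1 - γ) * ∑' h : ℕ, γ ^ h * eventProb P π d0 h (fun f => ∃ i, f i ∈ I)

/-- The deterministic policy associated to a map `g : S → A`. -/
def detPol (g : S → A) : S → A → ℝ := fun s a => if a = g s then 1 else 0

/-- Bellman optimality operator `T̄` of the cost-based MDP. -/
def Tbar (P : S → A → S → ℝ) (sbad : S) (γ : ℝ) (Q : S → A → ℝ) : S → A → ℝ :=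
  fun s a =>
    cost sbad s a +
      γ * ∑ s', P s a s' * Finset.univ.inf' Finset.univ_nonempty (fun a' => Q s' a')


/-!
If an optimal policy `π` of `M̃` put positive probability on intervened actions at a state it
reaches, move that probability to a non-intervened action, which exists because `I` is partial.
In `M̃` an intervened pair is worth exactly `R̃` (the penalty, then absorption), while all values
of `M̃` are at least `R̃`, so a non-intervened pair is worth at least `γ R̃ > R̃`. The redirected
policy therefore has nonnegative advantage over `π` everywhere, positive where the moved mass is,
and the performance difference lemma makes it strictly better unless it never reaches such a
state; in that case both policies have the same state distributions. Hence every pair of `I` has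
zero occupancy under `π`, and a trajectory prefix meeting `I` has probability zero.
-/

end SafeRL

namespace SafeRL

variable {S A : Type*}

section MarkovChain

variable [Fintype S] [Fintype A] (P : S → A → S → ℝ) (π : S → A → ℝ)

theorem IsDist.le_one {d : S → ℝ} (hd : IsDist d) (s : S) : d s ≤ 1 :=
  hd.2 ▸ Finset.single_le_sum (fun x _ => hd.1 x) (Finset.mem_univ s)

theorem IsDist.abs_sum_mul_le {d : S → ℝ} (hd : IsDist d) (g : S → ℝ) :
    |∑ s, d s * g s| ≤ ∑ s, |g s| :=
  (Finset.abs_sum_le_sum_abs _ _).trans <| Finset.sum_le_sum fun s _ => by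
    rw [abs_mul, abs_of_nonneg (hd.1 s)]
    exact mul_le_of_le_one_left (abs_nonneg _) (hd.le_one s)

theorem pureDist_isDist (s : S) : IsDist (pureDist s) :=
  ⟨fun s' => by unfold pureDist; split_ifs <;> norm_num, by simp [pureDist]⟩

theorem sum_sum_mul_mul (d : S → ℝ) (g : S → A → ℝ) :
    ∑ s, ∑ a, d s * π s a * g s a = ∑ s, d s * ∑ a, π s a * g s a := by
  simp only [Finset.mul_sum, mul_assoc]

theorem sum_step_mul (d V : S → ℝ) :
    ∑ s', step P π d s' * V s' = ∑ s, d s * ∑ a, π s a * ∑ s', P s a s' * V s' := by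
  simp only [step, Finset.sum_mul, Finset.mul_sum, mul_assoc]
  rw [Finset.sum_comm]
  exact Finset.sum_congr rfl fun s _ => Finset.sum_comm

theorem step_nonneg (hP : IsKernel P) (hπ : IsPolicy π) {d : S → ℝ} (hd : ∀ s, 0 ≤ d s)
    (s' : S) : 0 ≤ step P π d s' :=
  Finset.sum_nonneg fun s _ => Finset.sum_nonneg fun a _ =>
    mul_nonneg (mul_nonneg (hd s) ((hπ s).1 a)) ((hP s a).1 s')

theorem step_isDist (hP : IsKernel P) (hπ : IsPolicy π) {d : S → ℝ} (hd : IsDist d) :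
    IsDist (step P π d) := by
  refine ⟨step_nonneg P π hP hπ hd.1, ?_⟩
  simpa [hd.2, (hP _ _).2, (hπ _).2] using sum_step_mul P π d 1

theorem smul_le_step (hP : IsKernel P) (hπ : IsPolicy π) {d : S → ℝ} (hd : ∀ s, 0 ≤ d s)
    (s : S) (a : A) : (d s * π s a) • P s a ≤ step P π d := fun s' => by
  have hnn : ∀ x b, 0 ≤ d x * π x b * P x b s' := fun x b =>
    mul_nonneg (mul_nonneg (hd x) ((hπ x).1 b)) ((hP x b).1 s')
  calc (d s * π s a) • P s a s' = d s * π s a * P s a s' := smul_eq_mul ..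
    _ ≤ ∑ b, d s * π s b * P s b s' :=
      Finset.single_le_sum (f := fun b => d s * π s b * P s b s') (fun b _ => hnn s b)
        (Finset.mem_univ a)
    _ ≤ step P π d s' :=
      Finset.single_le_sum (f := fun x => ∑ b, d x * π x b * P x b s')
        (fun x _ => Finset.sum_nonneg fun b _ => hnn x b) (Finset.mem_univ s)

def stepLinearMap : Module.End ℝ (S → ℝ) where
  toFun := step P π
  map_add' d d' := by ext; simp only [step, Pi.add_apply, add_mul, Finset.sum_add_distrib]
  map_smul' c d := by
    ext; simp only [step, Pi.smul_apply, smul_eq_mul, RingHom.id_apply, Finset.mul_sum, mul_assoc]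

theorem distAt_eq_pow_apply (d : S → ℝ) (t : ℕ) :
    distAt P π d t = (stepLinearMap P π ^ t) d := by
  rw [Module.End.pow_apply]; rfl

theorem distAt_succ (d : S → ℝ) (t : ℕ) : distAt P π d (t + 1) = distAt P π (step P π d) t :=
  Function.iterate_succ_apply _ _ _

theorem distAt_succ' (d : S → ℝ) (t : ℕ) : distAt P π d (t + 1) = step P π (distAt P π d t) :=
  Function.iterate_succ_apply' _ _ _

theorem distAt_isDist (hP : IsKernel P) (hπ : IsPolicy π) {d : S → ℝ} (hd : IsDist d) (t : ℕ) :
    IsDist (distAt P π d t) := by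
  induction t with
  | zero => exact hd
  | succ t ih => rw [distAt_succ']; exact step_isDist P π hP hπ ih

theorem distAt_nonneg (hP : IsKernel P) (hπ : IsPolicy π) {d : S → ℝ} (hd : ∀ s, 0 ≤ d s)
    (t : ℕ) (s : S) : 0 ≤ distAt P π d t s := by
  induction t generalizing d with
  | zero => exact hd s
  | succ t ih => rw [distAt_succ]; exact ih (step_nonneg P π hP hπ hd)

theorem distAt_mono (hP : IsKernel P) (hπ : IsPolicy π) {d d' : S → ℝ} (h : d' ≤ d) (t : ℕ) :
    distAt P π d' t ≤ distAt P π d t := fun s => by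
  have := distAt_nonneg P π hP hπ (d := d - d') (fun s => sub_nonneg.2 (h s)) t s
  simpa [distAt_eq_pow_apply, map_sub] using this

theorem distAt_smul (c : ℝ) (d : S → ℝ) (t : ℕ) :
    distAt P π (c • d) t = c • distAt P π d t := by
  simp only [distAt_eq_pow_apply, map_smul]

theorem distAt_eq_sum_pureDist (d : S → ℝ) (t : ℕ) :
    distAt P π d t = ∑ x, d x • distAt P π (pureDist x) t := by
  conv_lhs => rw [show d = ∑ x, d x • pureDist x by ext; simp [pureDist]]
  simp only [distAt_eq_pow_apply, map_sum, map_smul]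

theorem distAt_eq_of_forall_ne_zero {π' : S → A → ℝ} {d : S → ℝ}
    (h : ∀ t s, distAt P π' d t s ≠ 0 → π' s = π s) (t : ℕ) :
    distAt P π' d t = distAt P π d t := by
  induction t with
  | zero => rfl
  | succ t ih =>
    rw [distAt_succ', distAt_succ', ← ih]
    ext s'
    refine Finset.sum_congr rfl fun s _ => ?_
    by_cases hs : distAt P π' d t s = 0
    · simp [hs]
    · rw [h t s hs]

end MarkovChain

section Value

variable [Fintype S] [Fintype A] (P : S → A → S → ℝ) (π : S → A → ℝ) (r : S → A → ℝ) (γ : ℝ)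

def advantage (π' : S → A → ℝ) (s : S) : ℝ :=
  ∑ a, π' s a * qf P π r γ s a - vf P π r γ s

variable {γ}

theorem summable_pow_mul_sum_distAt_mul (hP : IsKernel P) (hπ : IsPolicy π) (hγ0 : 0 ≤ γ)
    (hγ1 : γ < 1) {d : S → ℝ} (hd : IsDist d) (g : S → ℝ) :
    Summable fun t => γ ^ t * ∑ s, distAt P π d t s * g s := by
  refine .of_norm_bounded
    ((summable_geometric_of_lt_one hγ0 hγ1).mul_right (∑ s, |g s|)) fun t => ?_
  rw [Real.norm_eq_abs, abs_mul, abs_pow, abs_of_nonneg hγ0]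
  exact mul_le_mul_of_nonneg_left ((distAt_isDist P π hP hπ hd t).abs_sum_mul_le g)
    (pow_nonneg hγ0 t)

theorem value_eq_tsum (d : S → ℝ) :
    value P π r γ d = ∑' t, γ ^ t * ∑ s, distAt P π d t s * ∑ a, π s a * r s a := by
  simp only [value, sum_sum_mul_mul]

theorem sum_distAt_mul_eq_sum_pureDist (d g : S → ℝ) (t : ℕ) :
    ∑ s, distAt P π d t s * g s = ∑ x, d x * ∑ s, distAt P π (pureDist x) t s * g s := by
  simp only [distAt_eq_sum_pureDist P π d t, Finset.sum_apply, Pi.smul_apply, smul_eq_mul,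
    Finset.sum_mul, Finset.mul_sum, mul_assoc]
  exact Finset.sum_comm

theorem value_eq_sum_mul_vf (hP : IsKernel P) (hπ : IsPolicy π) (hγ0 : 0 ≤ γ) (hγ1 : γ < 1)
    (d : S → ℝ) : value P π r γ d = ∑ x, d x * vf P π r γ x := by
  have hsum x := summable_pow_mul_sum_distAt_mul P π hP hπ hγ0 hγ1 (pureDist_isDist x)
    fun s => ∑ a, π s a * r s a
  calc value P π r γ d
      = ∑' t, ∑ x, d x * (γ ^ t * ∑ s, distAt P π (pureDist x) t s * ∑ a, π s a * r s a) := by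
        rw [value_eq_tsum]
        refine tsum_congr fun t => ?_
        rw [sum_distAt_mul_eq_sum_pureDist, Finset.mul_sum]
        exact Finset.sum_congr rfl fun x _ => mul_left_comm _ _ _
    _ = ∑ x, d x * vf P π r γ x := by
        rw [Summable.tsum_finsetSum fun x _ => (hsum x).mul_left (d x)]
        simp only [tsum_mul_left, vf, value_eq_tsum]

theorem value_eq_add_value_step (hP : IsKernel P) (hπ : IsPolicy π) (hγ0 : 0 ≤ γ) (hγ1 : γ < 1)
    {d : S → ℝ} (hd : IsDist d) :
    value P π r γ d = ∑ s, d s * ∑ a, π s a * r s a + γ * value P π r γ (step P π d) := by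
  rw [value_eq_tsum, value_eq_tsum, (summable_pow_mul_sum_distAt_mul P π hP hπ hγ0 hγ1 hd
    fun s => ∑ a, π s a * r s a).tsum_eq_zero_add, ← tsum_mul_left]
  simp only [pow_zero, one_mul, distAt_succ, pow_succ, mul_assoc, mul_comm γ]
  rfl

theorem vf_eq_sum_mul_qf (hP : IsKernel P) (hπ : IsPolicy π) (hγ0 : 0 ≤ γ) (hγ1 : γ < 1)
    (s : S) : vf P π r γ s = ∑ a, π s a * qf P π r γ s a := by
  rw [vf, value_eq_add_value_step P π r hP hπ hγ0 hγ1 (pureDist_isDist s),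
    value_eq_sum_mul_vf P π r hP hπ hγ0 hγ1, sum_step_mul]
  simp [pureDist, qf, mul_add, Finset.sum_add_distrib, Finset.mul_sum, mul_left_comm γ]

theorem advantage_eq_zero_of_eq (hP : IsKernel P) (hπ : IsPolicy π) (hγ0 : 0 ≤ γ) (hγ1 : γ < 1)
    {π' : S → A → ℝ} {s : S} (h : π' s = π s) : advantage P π r γ π' s = 0 := by
  rw [advantage, h, vf_eq_sum_mul_qf P π r hP hπ hγ0 hγ1, sub_self]

theorem sum_mul_advantage (π' : S → A → ℝ) (d : S → ℝ) :
    ∑ s, d s * advantage P π r γ π' s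
      = ∑ s, d s * ∑ a, π' s a * r s a + γ * ∑ s', step P π' d s' * vf P π r γ s'
        - ∑ s, d s * vf P π r γ s := by
  simp only [sum_step_mul, Finset.mul_sum, ← Finset.sum_sub_distrib, ← Finset.sum_add_distrib]
  refine Finset.sum_congr rfl fun s _ => ?_
  simp only [advantage, qf, mul_add, Finset.sum_add_distrib, mul_left_comm _ γ, ← Finset.mul_sum]
  ring

/-- The performance difference lemma of Kakade and Langford. -/
theorem hasSum_advantage (hP : IsKernel P) (hπ : IsPolicy π) {π' : S → A → ℝ}
    (hπ' : IsPolicy π') (hγ0 : 0 ≤ γ) (hγ1 : γ < 1) {d : S → ℝ} (hd : IsDist d) :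
    HasSum (fun t => γ ^ t * ∑ s, distAt P π' d t s * advantage P π r γ π' s)
      (value P π' r γ d - value P π r γ d) := by
  set f : ℕ → ℝ := fun t => γ ^ t * ∑ s, distAt P π' d t s * vf P π r γ s
  have hf := summable_pow_mul_sum_distAt_mul P π' hP hπ' hγ0 hγ1 hd (vf P π r γ)
  have hreward : HasSum (fun t => γ ^ t * ∑ s, distAt P π' d t s * ∑ a, π' s a * r s a)
      (value P π' r γ d) := by
    rw [value_eq_tsum]
    exact (summable_pow_mul_sum_distAt_mul P π' hP hπ' hγ0 hγ1 hd _).hasSum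
  have htelescope : HasSum (fun t => f (t + 1) - f t) (-value P π r γ d) := by
    have h := ((hasSum_nat_add_iff' 1).2 hf.hasSum).sub hf.hasSum
    rw [value_eq_sum_mul_vf P π r hP hπ hγ0 hγ1]
    simpa [f, distAt] using h
  convert hreward.add htelescope using 1
  · ext t
    rw [sum_mul_advantage]
    simp only [f, distAt_succ', pow_succ]
    ring
  · ring

theorem distAt_mul_advantage_eq_zero (hP : IsKernel P) (hπ : IsPolicy π) {π' : S → A → ℝ}
    (hπ' : IsPolicy π') (hγ : 0 < γ) (hγ1 : γ < 1) {d : S → ℝ} (hd : IsDist d)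
    (hadv : ∀ s, 0 ≤ advantage P π r γ π' s) (hle : value P π' r γ d ≤ value P π r γ d)
    (t : ℕ) (s : S) : distAt P π' d t s * advantage P π r γ π' s = 0 := by
  have hterm t s : 0 ≤ distAt P π' d t s * advantage P π r γ π' s :=
    mul_nonneg (distAt_nonneg P π' hP hπ' hd.1 t s) (hadv s)
  have hnn t : 0 ≤ γ ^ t * ∑ s, distAt P π' d t s * advantage P π r γ π' s :=
    mul_nonneg (pow_nonneg hγ.le t) (Finset.sum_nonneg fun s _ => hterm t s)
  have hsum := hasSum_advantage P π r hP hπ hπ' hγ.le hγ1 hd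
  rw [le_antisymm (sub_nonpos.2 hle) (hsum.nonneg hnn), hasSum_zero_iff_of_nonneg hnn] at hsum
  have hsum_t := (mul_eq_zero.1 (congrFun hsum t)).resolve_left (pow_ne_zero t hγ.ne')
  exact (Finset.sum_eq_zero_iff_of_nonneg fun s _ => hterm t s).1 hsum_t s (Finset.mem_univ s)

end Value

section Trajectory

variable [Fintype S] [Fintype A] (P : S → A → S → ℝ) (π : S → A → ℝ)

theorem prefProb_eq_zero_of_exists_mem (hP : IsKernel P) (hπ : IsPolicy π) {X : Set (S × A)} :
    ∀ {n : ℕ} {d : S → ℝ}, (∀ s, 0 ≤ d s) →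
      (∀ t, ∀ p ∈ X, distAt P π d t p.1 * π p.1 p.2 = 0) →
      ∀ f : Fin n → S × A, (∃ i, f i ∈ X) → prefProb P π d n f = 0
  | 0, _, _, _, _, ⟨i, _⟩ => i.elim0
  | n + 1, d, hd, hX, f, ⟨i, hi⟩ => by
    set c := d (f 0).1 * π (f 0).1 (f 0).2
    change c * prefProb P π (P (f 0).1 (f 0).2) n (fun i => f i.succ) = 0
    by_cases hc : c = 0
    · rw [hc, zero_mul]
    have hc_pos : 0 < c := lt_of_le_of_ne (mul_nonneg (hd _) ((hπ _).1 _)) (Ne.symm hc)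
    refine mul_eq_zero_of_right _ (prefProb_eq_zero_of_exists_mem hP hπ (X := X) (hP _ _).1 ?_ _ ?_)
    · intro t p hp
      have hle : c * (distAt P π (P (f 0).1 (f 0).2) t p.1 * π p.1 p.2)
          ≤ distAt P π d (t + 1) p.1 * π p.1 p.2 := by
        rw [← mul_assoc, distAt_succ]
        refine mul_le_mul_of_nonneg_right ?_ ((hπ _).1 _)
        simpa [distAt_smul] using
          distAt_mono P π hP hπ (smul_le_step P π hP hπ hd (f 0).1 (f 0).2) t p.1
      rw [hX (t + 1) p hp] at hle
      exact le_antisymm (nonpos_of_mul_nonpos_right hle hc_pos)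
        (mul_nonneg (distAt_nonneg P π hP hπ (hP _ _).1 t p.1) ((hπ _).1 p.2))
    · cases i using Fin.cases with
      | zero => exact absurd (hX 0 _ hi) hc
      | succ j => exact ⟨j, hi⟩

theorem eventProb_exists_mem_eq_zero (hP : IsKernel P) (hπ : IsPolicy π) {d : S → ℝ}
    (hd : ∀ s, 0 ≤ d s) {X : Set (S × A)} (hX : ∀ t, ∀ p ∈ X, distAt P π d t p.1 * π p.1 p.2 = 0)
    (n : ℕ) : eventProb P π d n (fun f => ∃ i, f i ∈ X) = 0 :=
  Finset.sum_eq_zero fun f _ => by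
    split_ifs with hf
    exacts [prefProb_eq_zero_of_exists_mem P π hP hπ hd hX f hf, rfl]

end Trajectory

section Absorbing

variable (P : S → A → S → ℝ) (I : Set (S × A)) (r : S → A → ℝ) (Rt : ℝ) {γ : ℝ}

theorem extPol_isPolicy [Fintype A] [Nonempty A] {π : S → A → ℝ} (hπ : IsPolicy π) :
    IsPolicy (extPol π) := by
  rintro (_ | s)
  · exact ⟨fun _ => inv_nonneg.2 (Nat.cast_nonneg _), by simp [extPol]⟩
  · exact hπ s

variable [Fintype S]

theorem Ptil_isKernel (hP : IsKernel P) : IsKernel (Ptil P I) := by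
  rintro (_ | s) a
  · have : Ptil P I none a = pureDist none := by ext s'; simp [Ptil, pureDist]
    exact this ▸ pureDist_isDist _
  by_cases ha : (s, a) ∈ I
  · have : Ptil P I (some s) a = pureDist none := by ext s'; simp [Ptil, ha, pureDist]
    exact this ▸ pureDist_isDist _
  · refine ⟨fun s' => ?_, ?_⟩
    · cases s' <;> simp [Ptil, ha, (hP s a).1]
    · simp [Ptil, ha, Fintype.sum_option, (hP s a).2]

theorem extDist_isDist {d : S → ℝ} (hd : IsDist d) : IsDist (extDist d) :=
  ⟨by rintro (_ | s); exacts [le_rfl, hd.1 s], by simp [extDist, Fintype.sum_option, hd.2]⟩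

variable [Fintype A]

theorem distAt_Ptil_extDist {π : S → A → ℝ} (hπ : ∀ p ∈ I, π p.1 p.2 = 0) (d : S → ℝ) (t : ℕ) :
    distAt (Ptil P I) (extPol π) (extDist d) t = extDist (distAt P π d t) := by
  induction t with
  | zero => rfl
  | succ t ih =>
    rw [distAt_succ', distAt_succ', ih]
    ext s'
    rw [step, Fintype.sum_option]
    simp only [extDist, zero_mul, Finset.sum_const_zero, zero_add]
    cases s' with
    | none =>
      refine Finset.sum_eq_zero fun s _ => Finset.sum_eq_zero fun a _ => ?_
      by_cases ha : (s, a) ∈ I <;> simp [Ptil, extPol, ha, hπ (s, a)]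
    | some s' =>
      refine Finset.sum_congr rfl fun s _ => Finset.sum_congr rfl fun a _ => ?_
      by_cases ha : (s, a) ∈ I <;> simp [Ptil, extPol, ha, hπ (s, a)]

variable {π : S → A → ℝ}

theorem qf_Ptil_of_not_mem {s : S} {a : A} (ha : (s, a) ∉ I) :
    qf (Ptil P I) (extPol π) (rtil r I Rt) γ (some s) a
      = r s a + γ * ∑ s', P s a s' * vf (Ptil P I) (extPol π) (rtil r I Rt) γ (some s') := by
  simp [qf, Ptil, rtil, ha, Fintype.sum_option]

variable [Nonempty A] (hP : IsKernel P) (hπ : IsPolicy π) (hγ0 : 0 ≤ γ) (hγ1 : γ < 1)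
include hP hπ hγ0 hγ1

theorem vf_Ptil_none : vf (Ptil P I) (extPol π) (rtil r I Rt) γ none = 0 := by
  have h := vf_eq_sum_mul_qf (Ptil P I) (extPol π) (rtil r I Rt) (Ptil_isKernel P I hP)
    (extPol_isPolicy hπ) hγ0 hγ1 none
  simp only [qf, Ptil, rtil, Fintype.sum_option, zero_add] at h
  simp [← Finset.sum_mul, (extPol_isPolicy hπ none).2] at h
  nlinarith

theorem qf_Ptil_of_mem {s : S} {a : A} (ha : (s, a) ∈ I) :
    qf (Ptil P I) (extPol π) (rtil r I Rt) γ (some s) a = Rt := by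
  simp [qf, Ptil, rtil, ha, vf_Ptil_none P I r Rt hP hπ hγ0 hγ1]

/-- At a minimiser `x₀` of `V` the Bellman equation gives `V x₀ ≥ min R̃ (γ V x₀)`, since an
intervention pays `R̃` once and is then absorbed. -/
theorem le_vf_Ptil (hr : ∀ s a, 0 ≤ r s a) (hRt : Rt ≤ 0) (x : Option S) :
    Rt ≤ vf (Ptil P I) (extPol π) (rtil r I Rt) γ x := by
  set V := vf (Ptil P I) (extPol π) (rtil r I Rt) γ
  obtain ⟨x₀, -, hmin⟩ := Finset.exists_min_image Finset.univ V Finset.univ_nonempty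
  refine le_trans ?_ (hmin x (Finset.mem_univ x))
  rcases x₀ with _ | s
  · exact hRt.trans_eq (vf_Ptil_none P I r Rt hP hπ hγ0 hγ1).symm
  have hq a : min Rt (γ * V (some s)) ≤ qf (Ptil P I) (extPol π) (rtil r I Rt) γ (some s) a := by
    by_cases ha : (s, a) ∈ I
    · rw [qf_Ptil_of_mem P I r Rt hP hπ hγ0 hγ1 ha]
      exact min_le_left _ _
    have hmean : V (some s) ≤ ∑ s', P s a s' * V (some s') :=
      calc V (some s) = ∑ s', P s a s' * V (some s) := by
            rw [← Finset.sum_mul, (hP s a).2, one_mul]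
        _ ≤ _ := Finset.sum_le_sum fun s' _ =>
            mul_le_mul_of_nonneg_left (hmin _ (Finset.mem_univ _)) ((hP s a).1 s')
    rw [qf_Ptil_of_not_mem P I r Rt ha]
    exact (min_le_right _ _).trans (by nlinarith [hr s a, mul_le_mul_of_nonneg_left hmean hγ0])
  have hV : min Rt (γ * V (some s)) ≤ V (some s) :=
    calc min Rt (γ * V (some s)) = ∑ a, π s a * min Rt (γ * V (some s)) := by
          rw [← Finset.sum_mul, (hπ s).2, one_mul]
      _ ≤ ∑ a, π s a * qf (Ptil P I) (extPol π) (rtil r I Rt) γ (some s) a :=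
          Finset.sum_le_sum fun a _ => mul_le_mul_of_nonneg_left (hq a) ((hπ s).1 a)
      _ = V (some s) := (vf_eq_sum_mul_qf (Ptil P I) (extPol π) (rtil r I Rt)
          (Ptil_isKernel P I hP) (extPol_isPolicy hπ) hγ0 hγ1 (some s)).symm
  rcases le_total Rt (γ * V (some s)) with h | h
  · rwa [min_eq_left h] at hV
  · rw [min_eq_right h] at hV
    nlinarith

theorem lt_qf_Ptil_of_not_mem (hr : ∀ s a, 0 ≤ r s a) (hRt : Rt < 0) {s : S} {a : A}
    (ha : (s, a) ∉ I) : Rt < qf (Ptil P I) (extPol π) (rtil r I Rt) γ (some s) a := by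
  have hmean : Rt ≤ ∑ s', P s a s' * vf (Ptil P I) (extPol π) (rtil r I Rt) γ (some s') :=
    calc Rt = ∑ s', P s a s' * Rt := by rw [← Finset.sum_mul, (hP s a).2, one_mul]
      _ ≤ _ := Finset.sum_le_sum fun s' _ => mul_le_mul_of_nonneg_left
          (le_vf_Ptil P I r Rt hP hπ hγ0 hγ1 hr hRt.le _) ((hP s a).1 s')
  rw [qf_Ptil_of_not_mem P I r Rt ha]
  nlinarith [hr s a, mul_le_mul_of_nonneg_left hmean hγ0]

end Absorbing

section Redirect

variable [Fintype A] (π : S → A → ℝ) (I : Set (S × A))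

def interventionMass (s : S) : ℝ := ∑ a, if (s, a) ∈ I then π s a else 0

def redirect (g : S → A) (s : S) (a : A) : ℝ :=
  (if (s, a) ∈ I then 0 else π s a) + if a = g s then interventionMass π I s else 0

variable {π} {I}

theorem interventionMass_nonneg (hπ : IsPolicy π) (s : S) : 0 ≤ interventionMass π I s :=
  Finset.sum_nonneg fun a _ => by split_ifs; exacts [(hπ s).1 a, le_rfl]

theorem le_interventionMass (hπ : IsPolicy π) {s : S} {a : A} (ha : (s, a) ∈ I) :
    π s a ≤ interventionMass π I s := by
  unfold interventionMass
  simpa [ha] using Finset.single_le_sum (f := fun b => if (s, b) ∈ I then π s b else 0)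
    (fun b _ => by split_ifs; exacts [(hπ s).1 b, le_rfl]) (Finset.mem_univ a)

theorem redirect_isPolicy (hπ : IsPolicy π) (g : S → A) : IsPolicy (redirect π I g) := by
  intro s
  refine ⟨fun a => add_nonneg ?_ ?_, ?_⟩
  · split_ifs; exacts [le_rfl, (hπ s).1 a]
  · split_ifs; exacts [interventionMass_nonneg hπ s, le_rfl]
  · have : ∑ a, (if (s, a) ∈ I then 0 else π s a) + interventionMass π I s = 1 := by
      rw [interventionMass, ← Finset.sum_add_distrib, ← (hπ s).2]
      exact Finset.sum_congr rfl fun a _ => by split_ifs <;> simp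
    simpa [redirect, Finset.sum_add_distrib] using this

theorem redirect_eq_zero {g : S → A} (hg : ∀ s, (s, g s) ∉ I) {s : S} {a : A} (ha : (s, a) ∈ I) :
    redirect π I g s a = 0 := by
  have : a ≠ g s := fun h => hg s (h ▸ ha)
  simp [redirect, ha, this]

theorem redirect_eq_of_interventionMass_eq_zero (hπ : IsPolicy π) (g : S → A) {s : S}
    (h : interventionMass π I s = 0) : redirect π I g s = π s := by
  ext a
  by_cases ha : (s, a) ∈ I
  · simpa [redirect, ha, h] using
      (le_antisymm (h ▸ le_interventionMass hπ ha) ((hπ s).1 a)).symm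
  · simp [redirect, ha, h]

theorem sum_redirect_mul (g : S → A) (s : S) {q : A → ℝ} {c : ℝ}
    (hq : ∀ a, (s, a) ∈ I → q a = c) :
    ∑ a, redirect π I g s a * q a
      = ∑ a, π s a * q a + interventionMass π I s * (q (g s) - c) := by
  have h a : (if (s, a) ∈ I then 0 else π s a) * q a
      = π s a * q a - (if (s, a) ∈ I then π s a else 0) * c := by
    split_ifs with ha
    · rw [hq a ha]; ring
    · ring
  have hg : ∑ a, (if a = g s then interventionMass π I s else 0) * q a
      = interventionMass π I s * q (g s) := by
    simp [ite_mul]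
  simp only [redirect, add_mul, Finset.sum_add_distrib, h, Finset.sum_sub_distrib, hg,
    ← Finset.sum_mul]
  rw [interventionMass]
  ring

end Redirect

section Optimality

variable [Fintype S] [Fintype A] [Nonempty A] (P : S → A → S → ℝ) (I : Set (S × A))
  (r : S → A → ℝ) (Rt : ℝ) {γ : ℝ} {π : S → A → ℝ}
  (hP : IsKernel P) (hπ : IsPolicy π) (hγ1 : γ < 1)
include hP hπ hγ1

theorem advantage_Ptil_redirect (hγ0 : 0 ≤ γ) (g : S → A) (s : S) :
    advantage (Ptil P I) (extPol π) (rtil r I Rt) γ (extPol (redirect π I g)) (some s)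
      = interventionMass π I s
        * (qf (Ptil P I) (extPol π) (rtil r I Rt) γ (some s) (g s) - Rt) := by
  rw [advantage, vf_eq_sum_mul_qf _ _ _ (Ptil_isKernel P I hP) (extPol_isPolicy hπ) hγ0 hγ1]
  simp only [extPol]
  rw [sum_redirect_mul g s fun a ha => qf_Ptil_of_mem P I r Rt hP hπ hγ0 hγ1 ha]
  ring

theorem distAt_redirect_mul_interventionMass_eq_zero (hr : ∀ s a, 0 ≤ r s a) (hRt : Rt < 0)
    (hγ : 0 < γ) {d : S → ℝ} (hd : IsDist d) {g : S → A} (hg : ∀ s, (s, g s) ∉ I)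
    (hopt : value (Ptil P I) (extPol (redirect π I g)) (rtil r I Rt) γ (extDist d)
      ≤ value (Ptil P I) (extPol π) (rtil r I Rt) γ (extDist d)) (t : ℕ) (s : S) :
    distAt P (redirect π I g) d t s * interventionMass π I s = 0 := by
  have hadv_some s := advantage_Ptil_redirect P I r Rt hP hπ hγ1 hγ.le g s
  have hgap s : 0 < qf (Ptil P I) (extPol π) (rtil r I Rt) γ (some s) (g s) - Rt :=
    sub_pos.2 (lt_qf_Ptil_of_not_mem P I r Rt hP hπ hγ.le hγ1 hr hRt (hg s))
  have hadv : ∀ x, 0 ≤ advantage (Ptil P I) (extPol π) (rtil r I Rt) γ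
      (extPol (redirect π I g)) x := by
    rintro (_ | s)
    · exact (advantage_eq_zero_of_eq _ _ _ (Ptil_isKernel P I hP) (extPol_isPolicy hπ) hγ.le
        hγ1 (π' := extPol (redirect π I g)) (s := none) rfl).ge
    · rw [hadv_some]
      exact mul_nonneg (interventionMass_nonneg hπ s) (hgap s).le
  have hs := distAt_mul_advantage_eq_zero _ _ _ (Ptil_isKernel P I hP) (extPol_isPolicy hπ)
    (extPol_isPolicy (redirect_isPolicy hπ g)) hγ hγ1 (extDist_isDist hd) hadv hopt t (some s)
  rw [distAt_Ptil_extDist P I (fun p hp => redirect_eq_zero hg hp), hadv_some, ← mul_assoc] at hs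
  exact (mul_eq_zero.1 hs).resolve_right (hgap s).ne'

theorem distAt_mul_eq_zero_of_forall_value_le (hr : ∀ s a, 0 ≤ r s a) (hRt : Rt < 0)
    (hγ : 0 < γ) {d : S → ℝ} (hd : IsDist d) (hpartial : ∀ p ∈ I, ∃ a' : A, (p.1, a') ∉ I)
    (hopt : ∀ π', IsPolicy π' →
      value (Ptil P I) (extPol π') (rtil r I Rt) γ (extDist d)
        ≤ value (Ptil P I) (extPol π) (rtil r I Rt) γ (extDist d))
    (t : ℕ) : ∀ p ∈ I, distAt P π d t p.1 * π p.1 p.2 = 0 := by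
  have hsafe s : ∃ b, (s, b) ∉ I := by
    by_cases h : ∃ a, (s, a) ∈ I
    · obtain ⟨a, ha⟩ := h
      exact hpartial (s, a) ha
    · exact ⟨Classical.arbitrary A, fun ha => h ⟨_, ha⟩⟩
  choose g hg using hsafe
  have hzero := distAt_redirect_mul_interventionMass_eq_zero P I r Rt hP hπ hγ1 hr hRt hγ hd
    hg (hopt _ (redirect_isPolicy hπ g))
  have hsame : distAt P (redirect π I g) d t = distAt P π d t :=
    distAt_eq_of_forall_ne_zero P π (fun t s hs => redirect_eq_of_interventionMass_eq_zero hπ g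
      ((mul_eq_zero.1 (hzero t s)).resolve_left hs)) t
  intro p hp
  have hD := distAt_nonneg P π hP hπ hd.1 t p.1
  refine le_antisymm ?_ (mul_nonneg hD ((hπ _).1 _))
  calc distAt P π d t p.1 * π p.1 p.2 ≤ distAt P π d t p.1 * interventionMass π I p.1 :=
        mul_le_mul_of_nonneg_left (le_interventionMass hπ hp) hD
    _ = 0 := hsame ▸ hzero t p.1

end Optimality

variable [Fintype S] [Fintype A] [Nonempty A]

theorem stmt_16_general
    (P : S → A → S → ℝ) (r : S → A → ℝ) (γ : ℝ) (d0 : S → ℝ)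
    (I : Set (S × A)) (Rt : ℝ)
    (hP : IsKernel P) (hγ0 : 0 ≤ γ) (hγ1 : γ < 1)
    (hr : ∀ s a, 0 ≤ r s a ∧ r s a ≤ 1)
    (hd0 : IsDist d0)
    (hpartial : ∀ p ∈ I, ∃ a' : A, (p.1, a') ∉ I)
    (hRt : Rt < 0) :
    ∀ πo, IsPolicy πo →
      (∀ π', IsPolicy π' →
        value (Ptil P I) (extPol π') (rtil r I Rt) γ (extDist d0)
          ≤ value (Ptil P I) (extPol πo) (rtil r I Rt) γ (extDist d0)) →
      PG P πo d0 γ I = 0 := by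
  intro πo hπo hopt
  suffices ∀ h, γ ^ h * eventProb P πo d0 h (fun f => ∃ i, f i ∈ I) = 0 by
    simp [PG, this]
  intro h
  rcases hγ0.eq_or_lt with rfl | hγ
  · cases h <;> simp [eventProb]
  · have hvisit := distAt_mul_eq_zero_of_forall_value_le P I r Rt hP hπo hγ1
      (fun s a => (hr s a).1) hRt hγ hd0 hpartial hopt
    rw [eventProb_exists_mem_eq_zero P πo hP hπo hd0.1 hvisit h, mul_zero]

/-- if `R̃ < 0` and `I` is partial, every optimal policy of `M̃`
satisfies `P_G(π̃*) = 0`. -/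
theorem stmt_16
    (P : S → A → S → ℝ) (r : S → A → ℝ) (γ : ℝ) (sbad sabs : S) (d0 : S → ℝ)
    (I : Set (S × A)) (Rt : ℝ)
    (hP : IsKernel P) (hγ0 : 0 ≤ γ) (hγ1 : γ < 1)
    (hr : ∀ s a, 0 ≤ r s a ∧ r s a ≤ 1)
    (hne : sbad ≠ sabs)
    (hPbad : ∀ a, P sbad a = pureDist sabs)
    (hPabs : ∀ a, P sabs a = pureDist sabs)
    (hrbad : ∀ a : A, r sbad a = 0) (hrabs : ∀ a : A, r sabs a = 0)
    (hd0 : IsDist d0)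
    (hI : ∀ p ∈ I, p.1 ≠ sbad ∧ p.1 ≠ sabs)
    (hpartial : ∀ p ∈ I, ∃ a' : A, (p.1, a') ∉ I)
    (hRt : Rt < 0) :
    ∀ πo, IsPolicy πo →
      (∀ π', IsPolicy π' →
        value (Ptil P I) (extPol π') (rtil r I Rt) γ (extDist d0)
          ≤ value (Ptil P I) (extPol πo) (rtil r I Rt) γ (extDist d0)) →
      PG P πo d0 γ I = 0 :=
  stmt_16_general P r γ d0 I Rt hP hγ0 hγ1 hr hd0 hpartial hRt

end SafeRL
end
end

section
/- Let I ⊆ S_safe × A be partial, let π be any policy, and let π' be the corresponding shielded policy. Then for every h ≥ 0, Prob(s_▷ ∈ ξ^h | π, M) ≤ Prob(s_▷ ∈ ξ^h | π', M) + Prob(ξ^h ∩ I ≠ ∅ | π, M), where ξ^h = (s_0,a_0,…,s_{h−1},a_{h−1}) is the h-step trajectory prefix from d_0. -/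
open scoped BigOperators Classical

noncomputable section

namespace SafeRL

variable {S A : Type*} [Fintype S] [Fintype A] [Nonempty A]

lemma prefProb_nonneg (P : S → A → S → ℝ) (π : S → A → ℝ)
    (hP : ∀ s a s', 0 ≤ P s a s') (hπ : ∀ s a, 0 ≤ π s a) :
    ∀ (h : ℕ) (d : S → ℝ), (∀ s, 0 ≤ d s) → ∀ f : Fin h → S × A,
      0 ≤ prefProb P π d h f := by
  intro h
  induction h with
  | zero => intro d hd f; simp [prefProb]
  | succ n ih =>
      intro d hd f
      exact mul_nonneg (mul_nonneg (hd _) (hπ _ _))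
        (ih _ (fun s' => hP _ _ _) _)

lemma shield_nonneg (π μ : S → A → ℝ) (I : Set (S × A)) (sbad sabs : S)
    (hπ : IsPolicy π) (hμ : IsPolicy μ) :
    ∀ s a, 0 ≤ shield π μ I sbad sabs s a := by
  intro s a
  have hw : 0 ≤ 1 - ∑ a', if (s, a') ∈ I then π s a' else 0 := by
    have h1 : (∑ a', if (s, a') ∈ I then π s a' else 0) ≤ ∑ a', π s a' := by
      apply Finset.sum_le_sum
      intro a' _
      split
      · exact le_rfl
      · exact (hπ s).1 a'
    rw [(hπ s).2] at h1
    linarith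
  unfold shield
  split
  · exact (hπ s).1 a
  · have h2 : (0:ℝ) ≤ if (s, a) ∈ I then 0 else π s a := by
      split
      · exact le_rfl
      · exact (hπ s).1 a
    exact add_nonneg h2 (mul_nonneg ((hμ s).1 a) hw)

lemma shield_ge (π μ : S → A → ℝ) (I : Set (S × A)) (sbad sabs : S)
    (hπ : IsPolicy π) (hμ : IsPolicy μ) (s : S) (a : A) (hsa : (s, a) ∉ I) :
    π s a ≤ shield π μ I sbad sabs s a := by
  have hw : 0 ≤ 1 - ∑ a', if (s, a') ∈ I then π s a' else 0 := by
    have h1 : (∑ a', if (s, a') ∈ I then π s a' else 0) ≤ ∑ a', π s a' := by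
      apply Finset.sum_le_sum
      intro a' _
      split
      · exact le_rfl
      · exact (hπ s).1 a'
    rw [(hπ s).2] at h1
    linarith
  by_cases hs : s = sbad ∨ s = sabs
  · unfold shield
    rw [if_pos hs]
  · unfold shield
    rw [if_neg hs, if_neg hsa]
    linarith [mul_nonneg ((hμ s).1 a) hw]

lemma prefProb_mono (P : S → A → S → ℝ) (π μ : S → A → ℝ) (I : Set (S × A))
    (sbad sabs : S) (hP : IsKernel P) (hπ : IsPolicy π) (hμ : IsPolicy μ) :
    ∀ (h : ℕ) (d : S → ℝ), (∀ s, 0 ≤ d s) → ∀ f : Fin h → S × A,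
      (∀ i, f i ∉ I) →
      prefProb P π d h f ≤ prefProb P (shield π μ I sbad sabs) d h f := by
  intro h
  induction h with
  | zero => intro d hd f hf; simp [prefProb]
  | succ n ih =>
      intro d hd f hf
      show d (f 0).1 * π (f 0).1 (f 0).2 * prefProb P π _ n _
          ≤ d (f 0).1 * shield π μ I sbad sabs (f 0).1 (f 0).2 * prefProb P _ _ n _
      have hPn : ∀ s a, ∀ s', 0 ≤ P s a s' := fun s a s' => (hP s a).1 s'
      have hrest : prefProb P π (P (f 0).1 (f 0).2) n (fun i => f i.succ)
          ≤ prefProb P (shield π μ I sbad sabs) (P (f 0).1 (f 0).2) n (fun i => f i.succ) :=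
        ih _ (fun s' => hPn _ _ _) _ (fun i => hf i.succ)
      have hrest0 : 0 ≤ prefProb P π (P (f 0).1 (f 0).2) n (fun i => f i.succ) :=
        prefProb_nonneg P π hPn (fun s a => (hπ s).1 a) n _ (fun s' => hPn _ _ _) _
      have h1 : d (f 0).1 * π (f 0).1 (f 0).2
          ≤ d (f 0).1 * shield π μ I sbad sabs (f 0).1 (f 0).2 :=
        mul_le_mul_of_nonneg_left
          (shield_ge π μ I sbad sabs hπ hμ _ _ (hf 0)) (hd _)
      exact mul_le_mul h1 hrest hrest0
        (mul_nonneg (hd _) (shield_nonneg π μ I sbad sabs hπ hμ _ _))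

/-- policy safety bound:
`Prob(s_▷ ∈ ξ^h | π) ≤ Prob(s_▷ ∈ ξ^h | π') + Prob(ξ^h ∩ I ≠ ∅ | π)`. -/
theorem stmt_17
    (P : S → A → S → ℝ) (sbad sabs : S) (d0 : S → ℝ)
    (π μ : S → A → ℝ) (I : Set (S × A))
    (hP : IsKernel P)
    (hne : sbad ≠ sabs)
    (hPbad : ∀ a, P sbad a = pureDist sabs)
    (hPabs : ∀ a, P sabs a = pureDist sabs)
    (hd0 : IsDist d0) (hπ : IsPolicy π) (hμ : IsPolicy μ)
    (hI : ∀ p ∈ I, p.1 ≠ sbad ∧ p.1 ≠ sabs)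
    (hpartial : ∀ p ∈ I, ∃ a' : A, (p.1, a') ∉ I) :
    ∀ h : ℕ,
      eventProb P π d0 h (fun f => ∃ i, (f i).1 = sbad)
        ≤ eventProb P (shield π μ I sbad sabs) d0 h (fun f => ∃ i, (f i).1 = sbad)
          + eventProb P π d0 h (fun f => ∃ i, f i ∈ I) := by
  intro h
  set π' := shield π μ I sbad sabs with hπ'def
  have hπ'pol : ∀ s a, 0 ≤ π' s a := shield_nonneg π μ I sbad sabs hπ hμ
  have hPn : ∀ s a s', 0 ≤ P s a s' := fun s a s' => (hP s a).1 s'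
  have hπn : ∀ s a, 0 ≤ π s a := fun s a => (hπ s).1 a
  -- intermediate event: reach sbad and avoid I
  have key : eventProb P π d0 h (fun f => (∃ i, (f i).1 = sbad) ∧ ∀ i, f i ∉ I)
      ≤ eventProb P π' d0 h (fun f => ∃ i, (f i).1 = sbad) := by
    unfold eventProb
    apply Finset.sum_le_sum
    intro f _
    beta_reduce
    by_cases hE : (∃ i, (f i).1 = sbad) ∧ ∀ i, f i ∉ I
    · rw [if_pos hE, if_pos hE.1]
      exact prefProb_mono P π μ I sbad sabs hP hπ hμ h d0 hd0.1 f hE.2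
    · rw [if_neg hE]
      split
      · exact prefProb_nonneg P π' hPn hπ'pol h d0 hd0.1 f
      · exact le_rfl
  have split : eventProb P π d0 h (fun f => ∃ i, (f i).1 = sbad)
      ≤ eventProb P π d0 h (fun f => (∃ i, (f i).1 = sbad) ∧ ∀ i, f i ∉ I)
        + eventProb P π d0 h (fun f => ∃ i, f i ∈ I) := by
    unfold eventProb
    rw [← Finset.sum_add_distrib]
    apply Finset.sum_le_sum
    intro f _
    beta_reduce
    have hpp : 0 ≤ prefProb P π d0 h f :=
      prefProb_nonneg P π hPn hπn h d0 hd0.1 f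
    by_cases hE : ∃ i, (f i).1 = sbad
    · rw [if_pos hE]
      by_cases hF : ∃ i, f i ∈ I
      · rw [if_pos hF]
        by_cases hG : (∃ i, (f i).1 = sbad) ∧ ∀ i, f i ∉ I
        · rw [if_pos hG]; linarith
        · rw [if_neg hG]; linarith
      · push_neg at hF
        rw [if_pos ⟨hE, hF⟩, if_neg]
        · simp
        · rintro ⟨i, hi⟩; exact (hF i hi).elim
    · rw [if_neg hE]
      have hG : ¬((∃ i, (f i).1 = sbad) ∧ ∀ i, f i ∉ I) := fun hc => hE hc.1
      rw [if_neg hG]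
      by_cases hF : ∃ i, f i ∈ I
      · rw [if_pos hF]; linarith
      · rw [if_neg hF]; linarith
  calc eventProb P π d0 h (fun f => ∃ i, (f i).1 = sbad)
      ≤ eventProb P π d0 h (fun f => (∃ i, (f i).1 = sbad) ∧ ∀ i, f i ∉ I)
        + eventProb P π d0 h (fun f => ∃ i, f i ∈ I) := split
    _ ≤ eventProb P π' d0 h (fun f => ∃ i, (f i).1 = sbad)
        + eventProb P π d0 h (fun f => ∃ i, f i ∈ I) := by linarith

end SafeRL
end
end
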